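/- arXiv:0902.1065 — 3 statements merged into one kernel-verified Lean document; each statement's English description precedes it below -/
import Mathlib

section
/- Let U be a connected component of the basin B, and let V be the connected component of B containing the (connected) image f(U). Then f maps the boundary of U into the boundary of V: f(frontier U) ⊆ frontier V. -/
open Filter Metric Function

theorem stmt11
    (lam : ℂ) (hlam : lam ≠ 0)
    (f : ℂ → ℂ) (hf : f = fun z => lam * Complex.exp z)
    (p : ℕ) (hp : 1 ≤ p)
    (z₀ : ℂ) (hper : f^[p] z₀ = z₀)
    (hmin : ∀ j, 0 < j → j < p → f^[j] z₀ ≠ z₀)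
    (hattr : ‖deriv (f^[p]) z₀‖ < 1)
    (C : Set ℂ) (hC : C = {w | ∃ j < p, f^[j] z₀ = w})
    (B : Set ℂ)
    (hB : B = {z | Filter.Tendsto (fun n => Metric.infDist (f^[n] z) C) Filter.atTop (nhds 0)})
    (U : Set ℂ) (hU : ∃ z ∈ B, U = connectedComponentIn B z)
    (V : Set ℂ) (hV : ∃ z ∈ B, V = connectedComponentIn B z)
    (hfUV : f '' U ⊆ V) :
    f '' frontier U ⊆ frontier V := by
  have hfd : Differentiable ℂ f := by
    rw [hf]; exact Complex.differentiable_exp.const_mul lam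
  have hfc : Continuous f := hfd.continuous
  have hp0 : 0 < p := hp
  have hmemC : ∀ j, j < p → f^[j] z₀ ∈ C := by
    intro j hj; rw [hC]; exact ⟨j, hj, rfl⟩
  have hz₀C : z₀ ∈ C := by simpa using hmemC 0 hp0
  -- backward invariance
  have hback : ∀ z, f z ∈ B → z ∈ B := by
    intro z hz
    rw [hB] at hz ⊢
    have h2 : Tendsto (fun n => Metric.infDist (f^[n + 1] z) C) atTop (nhds 0) := by
      simpa [Function.iterate_succ_apply] using hz
    exact (tendsto_add_atTop_iff_nat 1).mp h2
  have hbackIter : ∀ m z, f^[m] z ∈ B → z ∈ B := by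
    intro m
    induction m with
    | zero => intro z hz; simpa using hz
    | succ m ih =>
      intro z hz
      rw [Function.iterate_succ_apply] at hz
      exact hback z (ih (f z) hz)
  -- contraction near z₀
  obtain ⟨k, hk0, hk1, r, hr, hcontr⟩ :
      ∃ k, 0 ≤ k ∧ k < 1 ∧ ∃ r > 0, ∀ w, dist w z₀ < r → dist (f^[p] w) z₀ ≤ k * dist w z₀ := by
    have hgd : Differentiable ℂ (f^[p]) := hfd.iterate p
    have hdd : HasDerivAt (f^[p]) (deriv (f^[p]) z₀) z₀ := (hgd z₀).hasDerivAt
    set d := deriv (f^[p]) z₀ with hd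
    refine ⟨(1 + ‖d‖) / 2, by positivity, by simp only [hd]; linarith, ?_⟩
    have hdk : ‖d‖ < (1 + ‖d‖) / 2 := by linarith
    have hslope := hasDerivAt_iff_tendsto_slope.mp hdd
    have hev : ∀ᶠ w in nhdsWithin z₀ {z₀}ᶜ, ‖slope (f^[p]) z₀ w‖ < (1 + ‖d‖) / 2 :=
      (hslope.norm).eventually_lt_const hdk
    rw [eventually_nhdsWithin_iff, Metric.eventually_nhds_iff] at hev
    obtain ⟨r, hr, hrs⟩ := hev
    refine ⟨r, hr, ?_⟩
    intro w hw
    by_cases hwz : w = z₀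
    · simp [hwz, hper]
    · have hs := hrs hw (by simpa using hwz)
      have key : f^[p] w - f^[p] z₀ = slope (f^[p]) z₀ w * (w - z₀) := by
        rw [slope_def_field]
        field_simp [sub_ne_zero.mpr hwz]
      have heq : dist (f^[p] w) z₀ = ‖slope (f^[p]) z₀ w‖ * dist w z₀ := by
        calc dist (f^[p] w) z₀ = ‖f^[p] w - f^[p] z₀‖ := by rw [dist_eq_norm, hper]
          _ = ‖slope (f^[p]) z₀ w * (w - z₀)‖ := by rw [key]
          _ = ‖slope (f^[p]) z₀ w‖ * dist w z₀ := by rw [norm_mul, dist_eq_norm]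
      rw [heq]
      exact mul_le_mul_of_nonneg_right hs.le dist_nonneg
  -- ball ⊆ B
  have hiter : ∀ w, dist w z₀ < r → ∀ m, dist ((f^[p])^[m] w) z₀ ≤ k ^ m * dist w z₀ := by
    intro w hw m
    induction m with
    | zero => simp
    | succ m ih =>
      have hlt : dist ((f^[p])^[m] w) z₀ < r :=
        lt_of_le_of_lt (ih.trans (by
          calc k ^ m * dist w z₀ ≤ 1 * dist w z₀ :=
                mul_le_mul_of_nonneg_right (pow_le_one₀ hk0 hk1.le) dist_nonneg
            _ = dist w z₀ := one_mul _)) hw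
      rw [Function.iterate_succ_apply']
      calc dist (f^[p] ((f^[p])^[m] w)) z₀ ≤ k * dist ((f^[p])^[m] w) z₀ := hcontr _ hlt
        _ ≤ k * (k ^ m * dist w z₀) := mul_le_mul_of_nonneg_left ih hk0
        _ = k ^ (m + 1) * dist w z₀ := by ring
  have hballsub : Metric.ball z₀ r ⊆ B := by
    intro w hw
    rw [Metric.mem_ball] at hw
    rw [hB]
    simp only [Set.mem_setOf_eq]
    have htend : Tendsto (fun m => (f^[p])^[m] w) atTop (nhds z₀) := by
      rw [tendsto_iff_dist_tendsto_zero]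
      have h0 : Tendsto (fun m : ℕ => k ^ m * dist w z₀) atTop (nhds 0) := by
        simpa using (tendsto_pow_atTop_nhds_zero_of_lt_one hk0 hk1).mul_const (dist w z₀)
      exact squeeze_zero (fun m => dist_nonneg) (fun m => hiter w hw m) h0
    rw [Metric.tendsto_atTop]
    intro ε hε
    have hj : ∀ j, j < p → ∃ M : ℕ, ∀ m ≥ M, dist (f^[j] ((f^[p])^[m] w)) (f^[j] z₀) < ε := by
      intro j hjp
      have : Tendsto (fun m => f^[j] ((f^[p])^[m] w)) atTop (nhds (f^[j] z₀)) :=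
        ((hfc.iterate j).continuousAt.tendsto).comp htend
      rw [Metric.tendsto_atTop] at this
      exact this ε hε
    choose M hM using hj
    classical
    set N := (Finset.range p).sup (fun j => if h : j < p then M j h else 0) with hN
    refine ⟨p * (N + 1), fun n hn => ?_⟩
    have hnp : n % p < p := Nat.mod_lt n hp0
    have hdiv : N < n / p := by
      have : p * (N + 1) ≤ n := hn
      have := Nat.le_div_iff_mul_le hp0 |>.mpr (by linarith [this] : (N+1) * p ≤ n)
      omega
    have hMle : M (n % p) hnp ≤ N := by
      have := Finset.le_sup (f := fun j => if h : j < p then M j h else 0)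
        (Finset.mem_range.mpr hnp)
      simpa [hnp] using this
    have hiterEq : f^[n] w = f^[n % p] ((f^[p])^[n / p] w) := by
      conv_lhs => rw [← Nat.mod_add_div n p]
      rw [Function.iterate_add_apply, Function.iterate_mul]
    have hclose : dist (f^[n] w) (f^[n % p] z₀) < ε := by
      rw [hiterEq]
      exact hM (n % p) hnp (n / p) (le_of_lt (lt_of_le_of_lt hMle hdiv))
    have : Metric.infDist (f^[n] w) C ≤ dist (f^[n] w) (f^[n % p] z₀) :=
      Metric.infDist_le_dist_of_mem (hmemC _ hnp)
    rw [Real.dist_eq, sub_zero, abs_of_nonneg Metric.infDist_nonneg]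
    exact lt_of_le_of_lt this hclose
  -- openness of B
  have hBopen : IsOpen B := by
    rw [isOpen_iff_mem_nhds]
    intro z hz
    -- δ for each cycle point
    have hδ : ∀ j, j < p → ∃ δ > 0, ∀ w, dist w (f^[j] z₀) < δ → dist (f^[p - j] w) z₀ < r := by
      intro j hjp
      have hcont : ContinuousAt (f^[p - j]) (f^[j] z₀) := (hfc.iterate _).continuousAt
      have hfix : f^[p - j] (f^[j] z₀) = z₀ := by
        rw [← Function.iterate_add_apply, Nat.sub_add_cancel hjp.le, hper]
      rw [Metric.continuousAt_iff] at hcont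
      obtain ⟨δ, hδ0, hδ⟩ := hcont r hr
      exact ⟨δ, hδ0, fun w hw => by have := hδ hw; rwa [hfix] at this⟩
    choose! δ hδ0 hδp using hδ
    classical
    have hne : (Finset.range p).Nonempty := ⟨0, Finset.mem_range.mpr hp0⟩
    set δm := (Finset.range p).inf' hne δ with hδm
    have hδm0 : 0 < δm := by
      rw [hδm, Finset.lt_inf'_iff]
      intro j hj
      exact hδ0 j (Finset.mem_range.mp hj)
    -- C compact nonempty
    have hCfin : C.Finite := by
      rw [hC]
      have : {w | ∃ j < p, f^[j] z₀ = w} = (fun j => f^[j] z₀) '' (Set.Iio p) := by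
        ext w; simp [eq_comm, Set.mem_image]
      rw [this]
      exact (Set.finite_Iio p).image _
    have hCc : IsCompact C := hCfin.isCompact
    -- some iterate close to C
    rw [hB, Set.mem_setOf_eq, Metric.tendsto_atTop] at hz
    obtain ⟨N, hN⟩ := hz δm hδm0
    have hNd : Metric.infDist (f^[N] z) C < δm := by
      have := hN N le_rfl
      rwa [Real.dist_eq, sub_zero, abs_of_nonneg Metric.infDist_nonneg] at this
    obtain ⟨y, hyC, hyd⟩ := hCc.exists_infDist_eq_dist ⟨z₀, hz₀C⟩ (f^[N] z)
    obtain ⟨j, hjp, hjy⟩ := by rw [hC] at hyC; exact hyC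
    have hdist : dist (f^[N] z) (f^[j] z₀) < δ j := by
      rw [hjy, ← hyd]
      refine lt_of_lt_of_le hNd ?_
      rw [hδm]
      exact Finset.inf'_le δ (Finset.mem_range.mpr hjp)
    have hin : f^[N + (p - j)] z ∈ Metric.ball z₀ r := by
      rw [Metric.mem_ball, Nat.add_comm, Function.iterate_add_apply]
      exact hδp j hjp _ hdist
    have hopen : IsOpen ((f^[N + (p - j)]) ⁻¹' Metric.ball z₀ r) :=
      Metric.isOpen_ball.preimage (hfc.iterate _)
    have hsub : (f^[N + (p - j)]) ⁻¹' Metric.ball z₀ r ⊆ B := fun u hu =>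
      hbackIter _ u (hballsub hu)
    exact Filter.mem_of_superset (hopen.mem_nhds hin) hsub
  -- topology part
  rintro y ⟨x, hxfr, rfl⟩
  obtain ⟨zU, hzU, hUeq⟩ := hU
  obtain ⟨zV, hzV, hVeq⟩ := hV
  have hVsub : V ⊆ B := hVeq ▸ connectedComponentIn_subset B zV
  have hUopen : IsOpen U := hUeq ▸ hBopen.connectedComponentIn
  have hxcl : x ∈ closure U := hxfr.1
  have hxnB : x ∉ B := by
    intro hxB
    have hW : IsOpen (connectedComponentIn B x) := hBopen.connectedComponentIn
    have hxW : x ∈ connectedComponentIn B x := mem_connectedComponentIn hxB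
    obtain ⟨y, hyW, hyU⟩ := mem_closure_iff.mp hxcl _ hW hxW
    have h1 : connectedComponentIn B x = connectedComponentIn B y := connectedComponentIn_eq hyW
    have h2 : connectedComponentIn B zU = connectedComponentIn B y :=
      connectedComponentIn_eq (hUeq ▸ hyU)
    have hxU : x ∈ U := by rw [hUeq, h2, ← h1]; exact hxW
    exact hxfr.2 (by rwa [hUopen.interior_eq])
  have hfxnB : f x ∉ B := fun h => hxnB (hback x h)
  constructor
  · have h1 : f x ∈ closure (f '' U) :=
      image_closure_subset_closure_image hfc ⟨x, hxcl, rfl⟩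
    exact closure_mono hfUV h1
  · exact fun h => hfxnB (hVsub (interior_subset h))
end

section
/- There exists c ∈ ℝ such that the left half-plane {z ∈ ℂ : Re(z) < c} is contained in the basin B; in particular some connected component of B contains a left half-plane. -/
/-!
Near `z₀` the map `f^[p]` is a contraction, so a disc `D` around `z₀` lies in the basin. The only
singular value of `f = λ exp` is `0`, since `f` is a covering of `ℂ ∖ {0}`. If the orbit of `0`
never entered `D`, every `f^[p m]` would have a holomorphic inverse branch `H` on `D` fixing `z₀`,
with `|H'(z₀)| = |μ|⁻ᵐ → ∞`, where `μ` is the multiplier of the cycle. By Bloch's theorem `H(D)`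
then contains a disc of radius `> π`, hence two points differing by `2πi`, which `f` identifies;
this contradicts `f^[p m] ∘ H = id`. So some `f^[N] 0` lies in `D`, and by continuity so does
`f^[N + 1] z` as soon as `Re z` is so negative that `f z` is close to `0`.
-/

open Complex Metric Set Filter Function Topology
open scoped Real

theorem isSimplyConnected_ball {E : Type*} [NormedAddCommGroup E] [NormedSpace ℝ E] {x : E}
    {r : ℝ} (hr : 0 < r) : IsSimplyConnected (ball x r) :=
  have := contractibleSpace_ball (x := x) hr
  SimplyConnectedSpace.ofContractible _

theorem Complex.exists_continuousOn_eqOn_exp_comp_of_exp_eq {X : Type*} [TopologicalSpace X]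
    [LocallyPathConnectedSpace X] {U : Set X} (hUc : IsSimplyConnected U) (hUo : IsOpen U)
    {g : X → ℂ} (hgc : ContinuousOn g U) (hg₀ : ∀ x ∈ U, g x ≠ 0) {a : X} (ha : a ∈ U) {w : ℂ}
    (hw : exp w = g a) :
    ∃ L : X → ℂ, ContinuousOn L U ∧ EqOn (exp ∘ L) g U ∧ L a = w := by
  obtain ⟨L, hLc, hL⟩ := exists_continuousOn_eqOn_exp_comp hUc hUo hgc
    (by rintro ⟨x, hx, h₀⟩; exact hg₀ x hx h₀)
  obtain ⟨n, hn⟩ := exp_eq_exp_iff_exists_int.1 (hw.trans (hL ha).symm)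
  refine ⟨fun x ↦ L x + n * (2 * π * I), hLc.add continuousOn_const, fun x hx ↦ ?_, hn.symm⟩
  simpa [exp_add] using hL hx

theorem deriv_iterate_ne_zero {𝕜 : Type*} [NontriviallyNormedField 𝕜] {f : 𝕜 → 𝕜}
    (hf : Differentiable 𝕜 f) (hf' : ∀ z, deriv f z ≠ 0) (n : ℕ) (z : 𝕜) :
    deriv f^[n] z ≠ 0 := by
  induction n generalizing z with
  | zero => simp
  | succ n ih =>
    rw [iterate_succ, deriv_comp z ((hf.iterate n) (f z)) (hf z)]
    exact mul_ne_zero (ih (f z)) (hf' z)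

theorem tendsto_iterate_of_norm_sub_le {E : Type*} [SeminormedAddCommGroup E] {g : E → E}
    {z₀ : E} {ρ K : ℝ} (hK₀ : 0 ≤ K) (hK : K < 1)
    (hg : ∀ z ∈ ball z₀ ρ, ‖g z - z₀‖ ≤ K * ‖z - z₀‖) {z : E} (hz : z ∈ ball z₀ ρ) :
    Tendsto (fun m ↦ g^[m] z) atTop (𝓝 z₀) := by
  have hbound : ∀ m, g^[m] z ∈ ball z₀ ρ ∧ ‖g^[m] z - z₀‖ ≤ K ^ m * ‖z - z₀‖ := by
    intro m
    induction m with
    | zero => simpa using hz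
    | succ m ih =>
      rw [iterate_succ_apply']
      have hstep := hg _ ih.1
      refine ⟨?_, ?_⟩
      · rw [mem_ball, dist_eq_norm]
        calc ‖g (g^[m] z) - z₀‖ ≤ K * ‖g^[m] z - z₀‖ := hstep
          _ ≤ ‖g^[m] z - z₀‖ := mul_le_of_le_one_left (norm_nonneg _) hK.le
          _ < ρ := by rw [← dist_eq_norm]; exact ih.1
      · calc ‖g (g^[m] z) - z₀‖ ≤ K * (K ^ m * ‖z - z₀‖) := hstep.trans (by gcongr; exact ih.2)
          _ = K ^ (m + 1) * ‖z - z₀‖ := by ring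
  rw [tendsto_iff_norm_sub_tendsto_zero]
  refine squeeze_zero (fun _ ↦ norm_nonneg _) (fun m ↦ (hbound m).2) ?_
  simpa using (tendsto_pow_atTop_nhds_zero_of_lt_one hK₀ hK).mul_const ‖z - z₀‖

theorem HasDerivAt.exists_ball_tendsto_iterate {𝕜 : Type*} [NontriviallyNormedField 𝕜]
    {g : 𝕜 → 𝕜} {z₀ μ : 𝕜} (hg : HasDerivAt g μ z₀) (hfix : g z₀ = z₀) (hμ : ‖μ‖ < 1) :
    ∃ ρ > 0, ∀ z ∈ ball z₀ ρ, Tendsto (fun m ↦ g^[m] z) atTop (𝓝 z₀) := by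
  obtain ⟨K, hμK, hK⟩ := exists_between hμ
  have hlin := (hasDerivAt_iff_isLittleO.1 hg).def (c := K - ‖μ‖) (by linarith)
  obtain ⟨ρ, hρ, hcontr⟩ := Metric.eventually_nhds_iff_ball.1 hlin
  refine ⟨ρ, hρ, fun y hy ↦ tendsto_iterate_of_norm_sub_le ((norm_nonneg μ).trans hμK.le) hK
    (fun z hz ↦ ?_) hy⟩
  have := hcontr z hz
  rw [hfix] at this
  calc ‖g z - z₀‖ ≤ ‖g z - z₀ - (z - z₀) • μ‖ + ‖(z - z₀) • μ‖ := norm_le_norm_sub_add _ _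
    _ ≤ (K - ‖μ‖) * ‖z - z₀‖ + ‖z - z₀‖ * ‖μ‖ := by rw [norm_smul]; gcongr
    _ = K * ‖z - z₀‖ := by ring

theorem tendsto_infDist_iterate_of_tendsto_iterate_iterate {X : Type*} [PseudoMetricSpace X]
    {f : X → X} (hf : Continuous f) {p : ℕ} (hp : p ≠ 0) {z₀ w : X}
    (hw : Tendsto (fun m ↦ (f^[p])^[m] w) atTop (𝓝 z₀)) :
    Tendsto (fun n ↦ infDist (f^[n] w) {y | ∃ j < p, f^[j] z₀ = y}) atTop (𝓝 0) := by
  set F : ℕ → ℝ := fun m ↦ ∑ j ∈ Finset.range p, dist (f^[j] ((f^[p])^[m] w)) (f^[j] z₀)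
  have hF : Tendsto F atTop (𝓝 0) := by
    simpa using tendsto_finsetSum (Finset.range p) fun j _ ↦
      (((hf.iterate j).tendsto z₀).comp hw).dist (tendsto_const_nhds (x := f^[j] z₀))
  refine squeeze_zero (fun _ ↦ infDist_nonneg) (fun n ↦ ?_)
    (hF.comp (Nat.tendsto_div_const_atTop hp))
  have hmod : n % p < p := Nat.mod_lt n (Nat.pos_of_ne_zero hp)
  have hsplit : f^[n] w = f^[n % p] ((f^[p])^[n / p] w) := by
    conv_lhs => rw [← Nat.mod_add_div n p]
    rw [iterate_add_apply, ← iterate_mul]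
  calc infDist (f^[n] w) {y | ∃ j < p, f^[j] z₀ = y} ≤ dist (f^[n] w) (f^[n % p] z₀) :=
        infDist_le_dist_of_mem ⟨n % p, hmod, rfl⟩
    _ ≤ F (n / p) := by
        rw [hsplit]
        exact Finset.single_le_sum (f := fun j ↦ dist (f^[j] ((f^[p])^[n / p] w)) (f^[j] z₀))
          (fun _ _ ↦ dist_nonneg) (Finset.mem_range.2 hmod)

theorem Complex.ball_subset_image_of_norm_deriv_le {h : ℂ → ℂ} {a : ℂ} {t : ℝ} (ht : 0 < t)
    (hd : DifferentiableOn ℂ h (ball a t))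
    (hbound : ∀ z ∈ ball a t, ‖deriv h z‖ ≤ 2 * ‖deriv h a‖) :
    ball (h a) (t * ‖deriv h a‖ / 24) ⊆ h '' ball a t := by
  set D := ‖deriv h a‖
  rcases (norm_nonneg (deriv h a)).eq_or_lt with hD | hD
  · simp [D, ← hD]
  have hdd : DifferentiableOn ℂ (deriv h) (ball a t) :=
    (hd.analyticOnNhd isOpen_ball).deriv.differentiableOn
  have hschwarz : ∀ z ∈ ball a t, ‖deriv h z - deriv h a‖ ≤ 3 * D / t * ‖z - a‖ := by
    intro z hz
    simpa only [dist_eq_norm] using dist_le_div_mul_dist_of_mapsTo_ball hdd (fun y hy ↦ by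
      rw [mem_closedBall, dist_eq_norm]
      linarith [norm_sub_le (deriv h y) (deriv h a), hbound y hy]) hz
  set σ := t / 6
  have hσ : 0 < σ := by positivity
  have hσt : closedBall a σ ⊆ ball a t := closedBall_subset_ball (div_lt_self ht (by norm_num))
  have hlin : ∀ z ∈ closedBall a σ,
      ‖(h z - deriv h a * z) - (h a - deriv h a * a)‖ ≤ D / 2 * ‖z - a‖ := by
    refine fun z hz ↦ Convex.norm_image_sub_le_of_norm_hasDerivWithin_le
      (f := fun y ↦ h y - deriv h a * y) (f' := fun y ↦ deriv h y - deriv h a)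
      (fun y hy ↦ ?_) (fun y hy ↦ ?_) (convex_closedBall a σ) (mem_closedBall_self hσ.le) hz
    · exact (((hd.differentiableAt (isOpen_ball.mem_nhds (hσt hy))).hasDerivAt).sub
        ((hasDerivAt_id y).const_mul _) |>.hasDerivWithinAt).congr_deriv (by simp)
    · calc ‖deriv h y - deriv h a‖ ≤ 3 * D / t * ‖y - a‖ := hschwarz y (hσt hy)
        _ ≤ 3 * D / t * σ := by gcongr; rwa [← dist_eq_norm, ← mem_closedBall]
        _ = D / 2 := by field_simp; ring
  have hsphere : ∀ z ∈ sphere a σ, t * D / 12 ≤ ‖h z - h a‖ := by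
    intro z hz
    have hza : ‖z - a‖ = σ := by rwa [← dist_eq_norm, ← mem_sphere]
    have happrox := hlin z (sphere_subset_closedBall hz)
    have hlin' : ‖deriv h a * (z - a)‖ = D * σ := by rw [norm_mul, hza]
    calc t * D / 12 = D * σ - D / 2 * σ := by ring
      _ ≤ ‖deriv h a * (z - a)‖ - ‖h z - h a - deriv h a * (z - a)‖ := by
          rw [hlin', ← hza]; gcongr; convert happrox using 2; ring
      _ ≤ ‖h z - h a‖ := by
          have := norm_sub_le (h z - h a) (h z - h a - deriv h a * (z - a))
          rw [sub_sub_cancel] at this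
          linarith
  have hnonconst : ∃ᶠ z in 𝓝 a, h z ≠ h a := by
    by_contra hconst
    rw [not_frequently] at hconst
    have hconst' : h =ᶠ[𝓝 a] fun _ ↦ h a := hconst.mono fun z hz ↦ not_not.1 hz
    exact hD.ne' (by rw [hconst'.deriv_eq, deriv_const, norm_zero])
  calc ball (h a) (t * D / 24) = ball (h a) (t * D / 12 / 2) := by ring_nf
    _ ⊆ h '' closedBall a σ :=
        (hd.diffContOnCl_ball hσt).ball_subset_image_closedBall hσ hsphere hnonconst
    _ ⊆ h '' ball a t := image_mono hσt

theorem Complex.exists_ball_subset_image {h : ℂ → ℂ} {c : ℂ} {r : ℝ} (hr : 0 < r)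
    (hd : DifferentiableOn ℂ h (ball c r)) :
    ∃ w, ball w (r * ‖deriv h c‖ / 96) ⊆ h '' ball c r := by
  set R := r / 2
  have hRr : closedBall c R ⊆ ball c r := closedBall_subset_ball (div_lt_self hr (by norm_num))
  -- Bloch's rescaling: at a maximum `a` of `φ`, `|h'|` is at most `2 |h' a|` on a disc around `a`
  -- whose radius is proportional to `φ a / |h' a|`.
  set φ : ℂ → ℝ := fun z ↦ (R - dist z c) * ‖deriv h z‖
  have hφ : ContinuousOn φ (closedBall c R) :=
    (continuous_const.sub (continuous_id.dist continuous_const)).continuousOn.mul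
      ((hd.analyticOnNhd isOpen_ball).deriv.continuousOn.mono hRr).norm
  obtain ⟨a, haR, hmax⟩ := (isCompact_closedBall c R).exists_isMaxOn
    ⟨c, mem_closedBall_self (by positivity)⟩ hφ
  have hφc : R * ‖deriv h c‖ ≤ φ a := by
    simpa [φ] using hmax (mem_closedBall_self (by positivity))
  rcases (mul_nonneg (by positivity : (0 : ℝ) ≤ R) (norm_nonneg (deriv h c))).eq_or_lt
    with h0 | hpos
  · refine ⟨h c, ?_⟩
    rw [show r * ‖deriv h c‖ / 96 = 0 by simp only [R] at h0; linarith, ball_zero]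
    exact empty_subset _
  have haR' : dist a c < R := by
    refine (mem_closedBall.1 haR).lt_of_ne fun hac ↦ ?_
    simp only [hac, sub_self, zero_mul, φ] at hφc
    linarith
  set t := (R - dist a c) / 2
  have ht_def : 2 * t = R - dist a c := by simp only [t]; ring
  have ht : 0 < t := by linarith
  have hta : ball a t ⊆ ball c r := fun z hz ↦ hRr (by
    rw [mem_closedBall]; linarith [dist_triangle z a c, mem_ball.1 hz])
  have hbound : ∀ z ∈ ball a t, ‖deriv h z‖ ≤ 2 * ‖deriv h a‖ := by
    intro z hz
    have hzR : t < R - dist z c := by linarith [dist_triangle z a c, mem_ball.1 hz]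
    have hzmax : (R - dist z c) * ‖deriv h z‖ ≤ 2 * t * ‖deriv h a‖ := by
      rw [ht_def]
      exact isMaxOn_iff.1 hmax z (by rw [mem_closedBall]; linarith)
    nlinarith [norm_nonneg (deriv h z)]
  refine ⟨h a, (ball_subset_ball ?_).trans
    ((ball_subset_image_of_norm_deriv_le ht (hd.mono hta) hbound).trans (image_mono hta))⟩
  have : φ a = 2 * t * ‖deriv h a‖ := by rw [ht_def]
  simp only [R] at hφc
  nlinarith

theorem Complex.exists_continuousOn_lift_const_mul_exp {X : Type*} [TopologicalSpace X]
    [LocallyPathConnectedSpace X] {U : Set X} (hUc : IsSimplyConnected U) (hUo : IsOpen U)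
    {lam : ℂ} {g : X → ℂ} (hgc : ContinuousOn g U) (hg₀ : ∀ x ∈ U, g x ≠ 0) {a : X} (ha : a ∈ U)
    {w : ℂ} (hw : lam * exp w = g a) :
    ∃ L : X → ℂ, ContinuousOn L U ∧ (∀ x ∈ U, lam * exp (L x) = g x) ∧ L a = w := by
  have hlam : lam ≠ 0 := left_ne_zero_of_mul (hw ▸ hg₀ a ha)
  obtain ⟨L, hLc, hL, hLa⟩ := exists_continuousOn_eqOn_exp_comp_of_exp_eq hUc hUo
    (hgc.div_const lam) (fun x hx ↦ div_ne_zero (hg₀ x hx) hlam) ha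
    (by rw [← hw, mul_div_cancel_left₀ _ hlam])
  refine ⟨L, hLc, fun x hx ↦ ?_, hLa⟩
  rw [show exp (L x) = g x / lam from hL hx, mul_div_cancel₀ _ hlam]

theorem Complex.exists_continuousOn_leftInvOn_iterate_const_mul_exp {U : Set ℂ}
    (hUc : IsSimplyConnected U) (hUo : IsOpen U) (lam : ℂ) {n : ℕ}
    (hU : ∀ k < n, (lam * exp ·)^[k] 0 ∉ U) {a x : ℂ} (ha : a ∈ U)
    (hx : (lam * exp ·)^[n] x = a) :
    ∃ H : ℂ → ℂ, ContinuousOn H U ∧ LeftInvOn (lam * exp ·)^[n] H U ∧ H a = x := by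
  induction n generalizing x with
  | zero => exact ⟨id, continuousOn_id, fun _ _ ↦ rfl, hx.symm⟩
  | succ n ih =>
    obtain ⟨G, hGc, hG, hGa⟩ := ih (fun k hk ↦ hU k (by omega)) hx
    have hG₀ : ∀ z ∈ U, G z ≠ 0 := by
      rintro z hz hGz
      exact hU n (by omega) (by rw [← hGz, hG hz]; exact hz)
    obtain ⟨L, hLc, hL, hLa⟩ :=
      exists_continuousOn_lift_const_mul_exp hUc hUo hGc hG₀ ha hGa.symm
    refine ⟨L, hLc, fun z hz ↦ ?_, hLa⟩
    rw [iterate_succ_apply, hL z hz, hG hz]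

theorem Complex.radius_le_pi_of_leftInvOn_iterate_const_mul_exp {lam : ℂ} {n : ℕ} (hn : n ≠ 0)
    {H : ℂ → ℂ} {U : Set ℂ} (hH : LeftInvOn (lam * exp ·)^[n] H U) {w : ℂ} {ρ : ℝ}
    (hw : ball w ρ ⊆ H '' U) : ρ ≤ π := by
  by_contra! hρ
  have hmem : ∀ s : ℂ, ‖s‖ = π → w + s ∈ ball w ρ := fun s hs ↦ by
    rwa [mem_ball, dist_self_add_left, hs]
  obtain ⟨a, ha, hHa⟩ := hw (hmem (-(π * I)) (by simp [abs_of_pos Real.pi_pos]))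
  obtain ⟨b, hb, hHb⟩ := hw (hmem (π * I) (by simp [abs_of_pos Real.pi_pos]))
  obtain ⟨k, rfl⟩ := Nat.exists_eq_add_one_of_ne_zero hn
  have hab : a = b := by
    have hshift : H b = H a + 2 * π * I := by rw [hHa, hHb]; ring
    rw [← hH ha, ← hH hb, iterate_succ_apply, iterate_succ_apply, hshift, exp_periodic]
  have : (2 * π : ℂ) * I = 0 := by
    linear_combination -((hHa.symm.trans (congrArg H hab)).trans hHb)
  simp [Real.pi_ne_zero] at this

theorem Complex.exists_iterate_zero_mem_ball {lam z₀ : ℂ} (hlam : lam ≠ 0) {p : ℕ}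
    (hper : (lam * exp ·)^[p] z₀ = z₀) (hattr : ‖deriv (lam * exp ·)^[p] z₀‖ < 1) {r : ℝ}
    (hr : 0 < r) : ∃ N, (lam * exp ·)^[N] 0 ∈ ball z₀ r := by
  set f : ℂ → ℂ := (lam * exp ·)
  set μ := deriv f^[p] z₀
  by_contra! hcon
  have hp : p ≠ 0 := by rintro rfl; simp [μ] at hattr
  have hf : Differentiable ℂ f := by fun_prop
  have hf' : ∀ n z, deriv f^[n] z ≠ 0 :=
    deriv_iterate_ne_zero hf fun z ↦ by simp [f, hlam, exp_ne_zero]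
  obtain ⟨m, hm, hm₀⟩ : ∃ m, π < r * ‖(μ ^ m)⁻¹‖ / 96 ∧ m ≠ 0 := by
    have hsmall := (tendsto_pow_atTop_nhds_zero_of_lt_one (norm_nonneg μ) hattr).eventually
      (gt_mem_nhds (by positivity : 0 < r / (96 * π)))
    obtain ⟨m, hm, hm₀⟩ := (hsmall.and (eventually_ne_atTop 0)).exists
    have hμm : 0 < ‖μ‖ ^ m := pow_pos (norm_pos_iff.2 (hf' p z₀)) m
    refine ⟨m, ?_, hm₀⟩
    rw [norm_inv, norm_pow, lt_div_iff₀ (by norm_num), ← div_eq_mul_inv, lt_div_iff₀ hμm]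
    rw [lt_div_iff₀ (by positivity)] at hm
    linarith
  obtain ⟨H, hHc, hHinv, hH₀⟩ := exists_continuousOn_leftInvOn_iterate_const_mul_exp
    (isSimplyConnected_ball hr) isOpen_ball lam (n := p * m) (fun k _ ↦ hcon k)
    (mem_ball_self hr) (by rw [iterate_mul]; exact iterate_fixed hper m)
  have hH : ∀ z ∈ ball z₀ r, HasDerivAt H (deriv f^[p * m] (H z))⁻¹ z := fun z hz ↦
    (((hf.iterate _) (H z)).hasDerivAt).of_local_left_inverse
      (hHc.continuousAt (isOpen_ball.mem_nhds hz)) (hf' _ _)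
      (eventually_of_mem (isOpen_ball.mem_nhds hz) hHinv)
  obtain ⟨w, hw⟩ := exists_ball_subset_image hr
    fun z hz ↦ (hH z hz).differentiableAt.differentiableWithinAt
  rw [(hH z₀ (mem_ball_self hr)).deriv, hH₀, iterate_mul,
    ((hf.iterate p z₀).hasDerivAt.iterate (hx := hper) (n := m)).deriv] at hw
  exact hm.not_ge (radius_le_pi_of_leftInvOn_iterate_const_mul_exp (mul_ne_zero hp hm₀) hHinv hw)

theorem stmt14_general
    (lam : ℂ) (hlam : lam ≠ 0)
    (f : ℂ → ℂ) (hf : f = fun z => lam * Complex.exp z)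
    (p : ℕ)
    (z₀ : ℂ) (hper : f^[p] z₀ = z₀)
    (hattr : ‖deriv (f^[p]) z₀‖ < 1)
    (C : Set ℂ) (hC : C = {w | ∃ j < p, f^[j] z₀ = w})
    (B : Set ℂ)
    (hB : B = {z | Filter.Tendsto (fun n => Metric.infDist (f^[n] z) C) Filter.atTop (nhds 0)}) :
    ∃ c : ℝ, {z : ℂ | z.re < c} ⊆ B := by
  subst hf hC hB
  have hp : p ≠ 0 := by rintro rfl; simp at hattr
  have hf : Differentiable ℂ (lam * exp ·) := by fun_prop
  obtain ⟨ρ, hρ, hbasin⟩ :=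
    ((hf.iterate p) z₀).hasDerivAt.exists_ball_tendsto_iterate hper hattr
  obtain ⟨N, hN⟩ := exists_iterate_zero_mem_ball hlam hper hattr hρ
  have hnear : ∀ᶠ z in comap re atBot, (lam * exp ·)^[N] (lam * exp z) ∈ ball z₀ ρ := by
    have hlim : Tendsto (fun z ↦ lam * exp z) (comap re atBot) (𝓝 0) := by
      simpa using tendsto_exp_comap_re_atBot.const_mul lam
    exact ((hf.iterate N).continuous.tendsto 0).comp hlim (isOpen_ball.mem_nhds hN)
  obtain ⟨c, -, hc⟩ := (atBot_basis_Iio.comap re).eventually_iff.1 hnear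
  refine ⟨c, fun z hz ↦ (tendsto_add_atTop_iff_nat (N + 1)).1 ?_⟩
  simpa only [iterate_add_apply, iterate_one] using
    tendsto_infDist_iterate_of_tendsto_iterate_iterate hf.continuous hp (hbasin _ (hc hz))

theorem stmt14
    (lam : ℂ) (hlam : lam ≠ 0)
    (f : ℂ → ℂ) (hf : f = fun z => lam * Complex.exp z)
    (p : ℕ) (hp : 1 ≤ p)
    (z₀ : ℂ) (hper : f^[p] z₀ = z₀)
    (hmin : ∀ j, 0 < j → j < p → f^[j] z₀ ≠ z₀)
    (hattr : ‖deriv (f^[p]) z₀‖ < 1)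
    (C : Set ℂ) (hC : C = {w | ∃ j < p, f^[j] z₀ = w})
    (B : Set ℂ)
    (hB : B = {z | Filter.Tendsto (fun n => Metric.infDist (f^[n] z) C) Filter.atTop (nhds 0)}) :
    ∃ c : ℝ, {z : ℂ | z.re < c} ⊆ B :=
  stmt14_general lam hlam f hf p z₀ hper hattr C hC B hB
end

section
/- If p > 1, then the basin B has infinitely many connected components, i.e. the set of connected components of B is infinite. -/
open Complex Metric Set Filter Function

noncomputable section

/-- continuous lift through exp on [0,1] for a nonvanishing continuous function. -/
lemma exists_exp_lift (η : ℝ → ℂ) (hη : Continuous η) (h0 : ∀ t, η t ≠ 0) :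
    ∃ L : ℝ → ℂ, Continuous L ∧ ∀ t ∈ Icc (0:ℝ) 1, Complex.exp (L t) = η t := by
  obtain ⟨t₀, ht₀, hmin⟩ := isCompact_Icc.exists_isMinOn (⟨0, by norm_num⟩ : (Icc (0:ℝ) 1).Nonempty)
    (hη.norm.continuousOn)
  set m : ℝ := ‖η t₀‖ with hm
  have hm0 : 0 < m := norm_pos_iff.mpr (h0 t₀)
  obtain ⟨δ, hδ0, hδ⟩ := Metric.uniformContinuousOn_iff.mp
    (isCompact_Icc.uniformContinuousOn_of_continuous hη.continuousOn) m hm0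
  obtain ⟨n, hn⟩ := exists_nat_gt (1/δ)
  have hn0 : 0 < (n:ℝ) := lt_of_le_of_lt (by positivity) hn
  have h1 : 1 < (n:ℝ) * δ := by rw [div_lt_iff₀ hδ0] at hn; linarith
  have hstep : (1:ℝ)/n < δ := by rw [div_lt_iff₀ hn0]; linarith
  have key : ∀ i : ℕ, i ≤ n → ∃ L : ℝ → ℂ, Continuous L ∧
      ∀ t ∈ Icc (0:ℝ) ((i:ℝ)/n), Complex.exp (L t) = η t := by
    intro i hi
    induction i with
    | zero =>
      refine ⟨fun _ => Complex.log (η 0), continuous_const, ?_⟩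
      intro t ht
      simp only [Nat.cast_zero, zero_div, Icc_self, mem_singleton_iff] at ht
      rw [ht, Complex.exp_log (h0 0)]
    | succ i ih =>
      push_cast
      obtain ⟨L, hL, hLx⟩ := ih (le_of_lt (Nat.lt_of_succ_le hi))
      set a : ℝ := (i:ℝ)/n with ha
      set b : ℝ := ((i:ℝ)+1)/n with hb
      have ha0 : 0 ≤ a := by positivity
      have hab : a ≤ b := by rw [ha, hb]; gcongr; linarith
      have hb1 : b ≤ 1 := by
        rw [hb, div_le_one hn0]; exact_mod_cast hi
      have hmem : ∀ s ∈ Icc a b, s ∈ Icc (0:ℝ) 1 := fun s hs =>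
        ⟨le_trans ha0 hs.1, le_trans hs.2 hb1⟩
      have hηa : m ≤ ‖η a‖ := hmin (hmem a ⟨le_rfl, hab⟩)
      have hsmem : ∀ t : ℝ, min (max t a) b ∈ Icc a b := fun t =>
        ⟨le_min (le_max_right _ _) hab, min_le_right _ _⟩
      have hquot : ∀ t : ℝ, ‖η (min (max t a) b) / η a - 1‖ < 1 := by
        intro t
        have hs := hsmem t
        have hdist : dist (η (min (max t a) b)) (η a) < m := by
          apply hδ _ (hmem _ hs) _ (hmem a ⟨le_rfl, hab⟩)
          rw [Real.dist_eq, _root_.abs_of_nonneg (by linarith [hs.1])]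
          have : b - a = 1/n := by rw [ha, hb]; ring
          linarith [hs.2, hstep]
        have heq : η (min (max t a) b) / η a - 1 = (η (min (max t a) b) - η a) / η a := by
          rw [sub_div, div_self (h0 a)]
        rw [heq, norm_div, div_lt_one (lt_of_lt_of_le hm0 hηa)]
        calc ‖η (min (max t a) b) - η a‖ = dist (η (min (max t a) b)) (η a) := (dist_eq_norm _ _).symm
        _ < m := hdist
        _ ≤ ‖η a‖ := hηa
      have hqne : ∀ t : ℝ, η (min (max t a) b) / η a ≠ 0 := by
        intro t h
        have := hquot t
        rw [h] at this
        simp at this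
      set g : ℝ → ℂ := fun t => L a + Complex.log (η (min (max t a) b) / η a) with hg
      have hgc : Continuous g := by
        apply continuous_const.add
        have hic : Continuous fun t : ℝ => η (min (max t a) b) / η a :=
          (hη.comp ((continuous_id.max continuous_const).min continuous_const)).div_const _
        rw [continuous_iff_continuousAt]
        intro t
        apply ContinuousAt.clog hic.continuousAt
        have : η (min (max t a) b) / η a = 1 + (η (min (max t a) b) / η a - 1) := by ring
        rw [this]
        exact Complex.mem_slitPlane_of_norm_lt_one (hquot t)
      refine ⟨fun t => if t ≤ a then L t else g t, ?_, ?_⟩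
      · apply Continuous.if_le hL hgc continuous_id continuous_const
        intro t ht
        simp only [id_eq] at ht
        rw [hg, ht]
        simp [max_self, min_eq_left hab, div_self (h0 a)]
      · intro t ht
        by_cases htle : t ≤ a
        · simp only [htle, if_true]
          exact hLx t ⟨ht.1, htle⟩
        · simp only [htle, if_false, hg]
          push_neg at htle
          have hmax : max t a = t := max_eq_left htle.le
          have hmin' : min t b = t := min_eq_left ht.2
          rw [hmax, hmin', Complex.exp_add, Complex.exp_log (div_ne_zero (h0 t) (h0 a)),
            hLx a ⟨ha0, le_rfl⟩, mul_comm, div_mul_cancel₀ _ (h0 a)]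
  obtain ⟨L, hL, hLx⟩ := key n le_rfl
  refine ⟨L, hL, ?_⟩
  intro t ht
  apply hLx
  rwa [div_self (ne_of_gt hn0)]

lemma im_int_two_pi (k : ℤ) : ((k:ℂ) * (2 * ↑Real.pi * I)).im = 2 * Real.pi * k := by
  simp [Complex.mul_im]
  ring

lemma lift_disp_unique {L L' : ℝ → ℂ} (hL : Continuous L) (hL' : Continuous L')
    (h : ∀ t ∈ Icc (0:ℝ) 1, Complex.exp (L t) = Complex.exp (L' t)) :
    L 1 - L 0 = L' 1 - L' 0 := by
  set g : ℝ → ℂ := fun t => L t - L' t with hgdef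
  have hg : Continuous g := hL.sub hL'
  have hmem : ∀ t ∈ Icc (0:ℝ) 1, ∃ k : ℤ, g t = k * (2 * Real.pi * I) := by
    intro t ht
    rw [← Complex.exp_eq_one_iff, hgdef]
    simp only
    rw [Complex.exp_sub, h t ht, div_self (Complex.exp_ne_zero _)]
  obtain ⟨k0, hk0⟩ := hmem 0 ⟨le_rfl, zero_le_one⟩
  obtain ⟨k1, hk1⟩ := hmem 1 ⟨zero_le_one, le_rfl⟩
  have hkk : k0 = k1 := by
    by_contra hne
    set u : ℝ → ℝ := fun t => (g t).im with hudef
    have hu : ContinuousOn u (Icc 0 1) := (Complex.continuous_im.comp hg).continuousOn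
    have hu0 : u 0 = 2 * Real.pi * k0 := by rw [hudef]; simp only; rw [hk0, im_int_two_pi]
    have hu1 : u 1 = 2 * Real.pi * k1 := by rw [hudef]; simp only; rw [hk1, im_int_two_pi]
    have hπ := Real.pi_pos
    have key : ∀ c : ℝ, c ∈ Icc (u 0) (u 1) ∪ Icc (u 1) (u 0) → ∃ t ∈ Icc (0:ℝ) 1, u t = c := by
      intro c hc
      rcases hc with hc | hc
      · obtain ⟨t, ht, hut⟩ := intermediate_value_Icc zero_le_one hu hc
        exact ⟨t, ht, hut⟩
      · obtain ⟨t, ht, hut⟩ := intermediate_value_Icc' zero_le_one hu hc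
        exact ⟨t, ht, hut⟩
    rcases lt_or_gt_of_ne hne with hlt | hlt
    · have hc : 2 * Real.pi * k0 + Real.pi ∈ Icc (u 0) (u 1) := by
        rw [hu0, hu1]
        constructor
        · linarith
        · have : (k0:ℝ) + 1 ≤ k1 := by exact_mod_cast hlt
          nlinarith
      obtain ⟨t, ht, hut⟩ := key _ (Or.inl hc)
      obtain ⟨k, hk⟩ := hmem t ht
      have : u t = 2 * Real.pi * k := by rw [hudef]; simp only; rw [hk, im_int_two_pi]
      rw [this] at hut
      have : (2*k : ℝ) = 2*k0 + 1 := by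
        have h2 : Real.pi * (2*k) = Real.pi * (2*k0+1) := by linarith
        have := mul_left_cancel₀ (ne_of_gt hπ) h2
        linarith
      have : 2*k = 2*k0 + 1 := by exact_mod_cast this
      omega
    · have hc : 2 * Real.pi * k1 + Real.pi ∈ Icc (u 1) (u 0) := by
        rw [hu0, hu1]
        constructor
        · linarith
        · have : (k1:ℝ) + 1 ≤ k0 := by exact_mod_cast hlt
          nlinarith
      obtain ⟨t, ht, hut⟩ := key _ (Or.inr hc)
      obtain ⟨k, hk⟩ := hmem t ht
      have : u t = 2 * Real.pi * k := by rw [hudef]; simp only; rw [hk, im_int_two_pi]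
      rw [this] at hut
      have : (2*k : ℝ) = 2*k1 + 1 := by
        have h2 : Real.pi * (2*k) = Real.pi * (2*k1+1) := by linarith
        have := mul_left_cancel₀ (ne_of_gt hπ) h2
        linarith
      have : 2*k = 2*k1 + 1 := by exact_mod_cast this
      omega
  have hgg : g 1 = g 0 := by rw [hk0, hk1, hkk]
  simp only [hgdef] at hgg
  linear_combination hgg

variable {lam : ℂ} {f : ℂ → ℂ} {p : ℕ} {z₀ : ℂ} {C B : Set ℂ}

lemma memB_iff (hB : B = {z | Tendsto (fun n => infDist (f^[n] z) C) atTop (nhds 0)}) (z : ℂ) :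
    z ∈ B ↔ f z ∈ B := by
  subst hB
  simp only [mem_setOf_eq]
  have h1 : (fun n => infDist (f^[n] (f z)) C) = fun n => infDist (f^[n+1] z) C := by
    funext n; rw [Function.iterate_succ_apply]
  rw [h1]
  exact (Filter.tendsto_add_atTop_iff_nat 1).symm

lemma memB_iter (hB : B = {z | Tendsto (fun n => infDist (f^[n] z) C) atTop (nhds 0)})
    (N : ℕ) (z : ℂ) : z ∈ B ↔ f^[N] z ∈ B := by
  induction N with
  | zero => simp
  | succ N ih => rw [ih, Function.iterate_succ_apply', ← memB_iff hB]

lemma iter_per (hper : f^[p] z₀ = z₀) : ∀ q, f^[p*q] z₀ = z₀ := by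
  intro q
  induction q with
  | zero => simp
  | succ q ih => rw [Nat.mul_succ, add_comm, Function.iterate_add_apply, ih, hper]

lemma iter_mod (hp0 : 0 < p) (hper : f^[p] z₀ = z₀) : ∀ n, f^[n] z₀ = f^[n % p] z₀ := by
  intro n
  conv_lhs => rw [← Nat.mod_add_div n p]
  rw [Function.iterate_add_apply, iter_per hper]

lemma cycle_mem_B (hB : B = {z | Tendsto (fun n => infDist (f^[n] z) C) atTop (nhds 0)})
    (hC : C = {w | ∃ j < p, f^[j] z₀ = w}) (hp0 : 0 < p) (hper : f^[p] z₀ = z₀) :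
    ∀ i, f^[i] z₀ ∈ B := by
  intro i
  subst hB
  simp only [mem_setOf_eq]
  have h1 : ∀ n, infDist (f^[n] (f^[i] z₀)) C = 0 := by
    intro n
    apply infDist_zero_of_mem
    rw [← Function.iterate_add_apply, hC]
    exact ⟨(n+i) % p, Nat.mod_lt _ hp0, (iter_mod hp0 hper (n+i)).symm⟩
  simp only [h1]
  exact tendsto_const_nhds

lemma cycle_inj (hp0 : 0 < p) (hper : f^[p] z₀ = z₀)
    (hmin : ∀ j, 0 < j → j < p → f^[j] z₀ ≠ z₀) :
    ∀ i < p, ∀ j < p, f^[i] z₀ = f^[j] z₀ → i = j := by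
  have key : ∀ i j, i < p → j < p → i < j → f^[i] z₀ = f^[j] z₀ → False := by
    intro i j hi hj hij heq
    have h1 : f^[p-j] (f^[j] z₀) = z₀ := by
      rw [← Function.iterate_add_apply, Nat.sub_add_cancel hj.le, hper]
    have h2 : f^[p-j+i] z₀ = z₀ := by
      rw [Function.iterate_add_apply, heq, h1]
    exact hmin (p-j+i) (by omega) (by omega) h2
  intro i hi j hj heq
  rcases lt_trichotomy i j with h | h | h
  · exact absurd heq (fun heq => key i j hi hj h heq)
  · exact h
  · exact absurd heq.symm (fun heq => key j i hj hi h heq)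

lemma sep_pos (hp : 1 < p) (hper : f^[p] z₀ = z₀)
    (hmin : ∀ j, 0 < j → j < p → f^[j] z₀ ≠ z₀) :
    ∃ s > 0, ∀ i < p, ∀ j < p, i ≠ j → s ≤ dist (f^[i] z₀) (f^[j] z₀) := by
  have hp0 : 0 < p := by omega
  classical
  have hmm : ∀ i j : ℕ, i < p → j < p → i ≠ j → (i, j) ∈
      (Finset.range p ×ˢ Finset.range p).filter (fun q : ℕ × ℕ => q.1 ≠ q.2) :=
    fun i j hi hj hij => Finset.mem_filter.mpr
      ⟨Finset.mem_product.mpr ⟨Finset.mem_range.mpr hi, Finset.mem_range.mpr hj⟩, hij⟩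
  have hne : ((Finset.range p ×ˢ Finset.range p).filter
      (fun q : ℕ × ℕ => q.1 ≠ q.2)).Nonempty := ⟨(0, 1), hmm 0 1 hp0 hp (by omega)⟩
  refine ⟨Finset.inf' _ hne (fun q : ℕ × ℕ => dist (f^[q.1] z₀) (f^[q.2] z₀)), ?_, ?_⟩
  · rw [gt_iff_lt, Finset.lt_inf'_iff]
    rintro ⟨i, j⟩ hij
    rw [Finset.mem_filter, Finset.mem_product, Finset.mem_range, Finset.mem_range] at hij
    refine dist_pos.mpr (fun h => hij.2 ?_)
    exact cycle_inj hp0 hper hmin i hij.1.1 j hij.1.2 h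
  · intro i hi j hj hij
    exact Finset.inf'_le _ (hmm i j hi hj hij)

lemma cont_fin (F : ℕ → ℂ → ℂ) (hF : ∀ i, Continuous (F i)) (pts : ℕ → ℂ) :
    ∀ (m : ℕ) (t : ℝ), 0 < t →
      ∃ ε > 0, ∀ i < m, ∀ x, dist x (pts i) < ε → dist (F i x) (F i (pts i)) < t := by
  intro m t ht
  induction m with
  | zero => exact ⟨1, one_pos, fun i hi => absurd hi (Nat.not_lt_zero i)⟩
  | succ m ih =>
    obtain ⟨ε, hε0, hε⟩ := ih
    obtain ⟨ε', hε'0, hε'⟩ := Metric.continuous_iff.mp (hF m) (pts m) t ht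
    refine ⟨min ε ε', lt_min hε0 hε'0, ?_⟩
    intro i hi x hx
    rcases Nat.lt_succ_iff_lt_or_eq.mp hi with h | h
    · exact hε i h x (lt_of_lt_of_le hx (min_le_left _ _))
    · subst h; exact hε' x (lt_of_lt_of_le hx (min_le_right _ _))

lemma f_diff (hf : f = fun z => lam * Complex.exp z) : Differentiable ℂ f := by
  subst hf; exact (differentiable_const _).mul Complex.differentiable_exp

lemma contraction (hf : f = fun z => lam * Complex.exp z) (hper : f^[p] z₀ = z₀)
    (hattr : ‖deriv (f^[p]) z₀‖ < 1) :
    ∃ c : ℝ, 0 ≤ c ∧ c < 1 ∧ ∃ r > 0, ∀ u, dist u z₀ ≤ r →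
      dist (f^[p] u) z₀ ≤ c * dist u z₀ := by
  have hdit : Differentiable ℂ (f^[p]) := (f_diff hf).iterate p
  set d := deriv (f^[p]) z₀ with hd
  have hdd : HasDerivAt (f^[p]) d z₀ := (hdit z₀).hasDerivAt
  set c := (1 + ‖d‖)/2 with hc
  have hc1 : c < 1 := by rw [hc]; linarith
  have hc0 : 0 ≤ c := by positivity
  have hlt : 0 < c - ‖d‖ := by rw [hc]; linarith
  have hlo := (hasDerivAt_iff_isLittleO.mp hdd).def hlt
  rw [Metric.eventually_nhds_iff] at hlo
  obtain ⟨ε, hε0, hball⟩ := hlo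
  refine ⟨c, hc0, hc1, ε/2, by positivity, ?_⟩
  intro u hu
  have h1 := hball (show dist u z₀ < ε by linarith)
  rw [hper] at h1
  have h2 : ‖(u - z₀) • d‖ = ‖u - z₀‖ * ‖d‖ := by rw [norm_smul]
  calc dist (f^[p] u) z₀ = ‖f^[p] u - z₀‖ := dist_eq_norm _ _
    _ = ‖(f^[p] u - z₀ - (u - z₀) • d) + (u - z₀) • d‖ := by ring_nf
    _ ≤ ‖f^[p] u - z₀ - (u - z₀) • d‖ + ‖(u - z₀) • d‖ := norm_add_le _ _
    _ ≤ (c - ‖d‖) * ‖u - z₀‖ + ‖u - z₀‖ * ‖d‖ := by rw [h2]; exact add_le_add h1 le_rfl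
    _ = c * ‖u - z₀‖ := by ring
    _ = c * dist u z₀ := by rw [dist_eq_norm]

lemma orbit_ctrl (hf : f = fun z => lam * Complex.exp z) (hper : f^[p] z₀ = z₀)
    (hattr : ‖deriv (f^[p]) z₀‖ < 1) (hp0 : 0 < p) :
    ∃ c : ℝ, 0 ≤ c ∧ c < 1 ∧ ∀ t : ℝ, 0 < t → ∃ ρ > 0, ρ ≤ t ∧ ∀ u, dist u z₀ < ρ →
      (∀ q, dist (f^[p*q] u) z₀ ≤ c^q * dist u z₀) ∧
      (∀ n, dist (f^[n] u) (f^[n % p] z₀) < t) := by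
  obtain ⟨c, hc0, hc1, r, hr0, hcon⟩ := contraction hf hper hattr
  refine ⟨c, hc0, hc1, ?_⟩
  intro t ht
  obtain ⟨δ, hδ0, hδ⟩ := cont_fin (fun i => f^[i])
    (fun i => (f_diff hf).continuous.iterate i) (fun _ => z₀) p t ht
  refine ⟨min δ (min t r), by positivity, le_trans (min_le_right _ _) (min_le_left _ _), ?_⟩
  intro u hu
  have hur : dist u z₀ < r := lt_of_lt_of_le hu (le_trans (min_le_right _ _) (min_le_right _ _))
  have huδ : dist u z₀ < δ := lt_of_lt_of_le hu (min_le_left _ _)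
  have hq : ∀ q, dist (f^[p*q] u) z₀ ≤ c^q * dist u z₀ := by
    intro q
    induction q with
    | zero => simp
    | succ q ih =>
      have hle : dist (f^[p*q] u) z₀ ≤ r := by
        refine le_trans ih (le_trans ?_ hur.le)
        exact mul_le_of_le_one_left dist_nonneg (pow_le_one₀ hc0 hc1.le)
      calc dist (f^[p*(q+1)] u) z₀ = dist (f^[p] (f^[p*q] u)) z₀ := by
            rw [Nat.mul_succ, add_comm, Function.iterate_add_apply]
        _ ≤ c * dist (f^[p*q] u) z₀ := hcon _ hle
        _ ≤ c * (c^q * dist u z₀) := mul_le_mul_of_nonneg_left ih hc0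
        _ = c^(q+1) * dist u z₀ := by ring
  refine ⟨hq, ?_⟩
  intro n
  have h1 : dist (f^[p*(n/p)] u) z₀ < δ := by
    refine lt_of_le_of_lt (hq _) (lt_of_le_of_lt ?_ huδ)
    exact mul_le_of_le_one_left dist_nonneg (pow_le_one₀ hc0 hc1.le)
  have hfn : f^[n] u = f^[n % p] (f^[p*(n/p)] u) := by
    conv_lhs => rw [← Nat.mod_add_div n p]
    rw [Function.iterate_add_apply]
  rw [hfn]
  exact hδ (n % p) (Nat.mod_lt _ hp0) _ h1

lemma mem_B_of_near (hf : f = fun z => lam * Complex.exp z) (hper : f^[p] z₀ = z₀)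
    (hattr : ‖deriv (f^[p]) z₀‖ < 1) (hp0 : 0 < p)
    (hB : B = {z | Tendsto (fun n => infDist (f^[n] z) C) atTop (nhds 0)})
    (hC : C = {w | ∃ j < p, f^[j] z₀ = w}) :
    ∃ ρB > 0, ∀ u, dist u z₀ < ρB → u ∈ B := by
  obtain ⟨c, hc0, hc1, hctl⟩ := orbit_ctrl hf hper hattr hp0
  obtain ⟨ρ1, hρ10, _, hctl1⟩ := hctl 1 one_pos
  refine ⟨ρ1, hρ10, ?_⟩
  intro u hu
  rw [hB]
  simp only [mem_setOf_eq]
  rw [Metric.tendsto_atTop]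
  intro ε hε
  obtain ⟨ρε, hρε0, hρεle, hctlε⟩ := hctl (min ε 1) (by positivity)
  obtain ⟨Q, hQ⟩ := (((tendsto_pow_atTop_nhds_zero_of_lt_one hc0 hc1).mul_const
    (dist u z₀)).eventually (gt_mem_nhds (show (0:ℝ) * dist u z₀ < ρε by simpa using hρε0))).exists_forall_of_atTop
  refine ⟨p*(Q+1), ?_⟩
  intro n hn
  have hnp : Q ≤ n / p := by
    have : Q + 1 ≤ n / p := (Nat.le_div_iff_mul_le hp0).mpr (by rw [Nat.mul_comm]; exact hn)
    omega
  set v := f^[p*(n/p)] u with hv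
  have hvz : dist v z₀ < ρε := by
    calc dist v z₀ ≤ c^(n/p) * dist u z₀ := (hctl1 u hu).1 _
      _ ≤ c^Q * dist u z₀ :=
        mul_le_mul_of_nonneg_right (pow_le_pow_of_le_one hc0 hc1.le hnp) dist_nonneg
      _ < ρε := hQ Q le_rfl
  have h2 := (hctlε v hvz).2 (n % p)
  rw [Nat.mod_mod_of_dvd _ dvd_rfl] at h2
  have hfn : f^[n] u = f^[n % p] v := by
    rw [hv, ← Function.iterate_add_apply, Nat.mod_add_div]
  have h3 : infDist (f^[n] u) C ≤ dist (f^[n] u) (f^[n % p] z₀) := by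
    apply infDist_le_dist_of_mem
    rw [hC]
    exact ⟨n % p, Nat.mod_lt _ hp0, rfl⟩
  rw [Real.dist_eq, sub_zero, _root_.abs_of_nonneg infDist_nonneg]
  calc infDist (f^[n] u) C ≤ dist (f^[n] u) (f^[n % p] z₀) := h3
    _ = dist (f^[n % p] v) (f^[n % p] z₀) := by rw [hfn]
    _ < min ε 1 := h2
    _ ≤ ε := min_le_left _ _

lemma iter_sub_apply (j : ℕ) (hj : j < p) (hper : f^[p] z₀ = z₀) :
    f^[p - j] (f^[j] z₀) = z₀ := by
  rw [← Function.iterate_add_apply, Nat.sub_add_cancel hj.le, hper]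

lemma mem_B_of_close (hf : f = fun z => lam * Complex.exp z) (hper : f^[p] z₀ = z₀)
    (hattr : ‖deriv (f^[p]) z₀‖ < 1) (hp0 : 0 < p)
    (hB : B = {z | Tendsto (fun n => infDist (f^[n] z) C) atTop (nhds 0)})
    (hC : C = {w | ∃ j < p, f^[j] z₀ = w}) :
    ∃ ε₀ > 0, ∀ x, infDist x C < ε₀ → x ∈ B := by
  obtain ⟨ρB, hρB0, hρB⟩ := mem_B_of_near hf hper hattr hp0 hB hC
  obtain ⟨ε, hε0, hε⟩ := cont_fin (fun i => f^[p - i])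
    (fun i => (f_diff hf).continuous.iterate _) (fun i => f^[i] z₀) p ρB hρB0
  have hCne : C.Nonempty := ⟨z₀, by rw [hC]; exact ⟨0, hp0, rfl⟩⟩
  refine ⟨ε, hε0, ?_⟩
  intro x hx
  obtain ⟨y, hy, hxy⟩ := (infDist_lt_iff hCne).mp hx
  rw [hC] at hy
  obtain ⟨j, hj, rfl⟩ := hy
  have h1 := hε j hj x hxy
  rw [iter_sub_apply j hj hper] at h1
  exact (memB_iter hB (p - j) x).mpr (hρB _ h1)

lemma B_open (hf : f = fun z => lam * Complex.exp z) (hper : f^[p] z₀ = z₀)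
    (hattr : ‖deriv (f^[p]) z₀‖ < 1) (hp0 : 0 < p)
    (hB : B = {z | Tendsto (fun n => infDist (f^[n] z) C) atTop (nhds 0)})
    (hC : C = {w | ∃ j < p, f^[j] z₀ = w}) : IsOpen B := by
  obtain ⟨ε₀, hε₀0, hε₀⟩ := mem_B_of_close hf hper hattr hp0 hB hC
  rw [isOpen_iff_forall_mem_open]
  intro z hz
  have hz' : Tendsto (fun n => infDist (f^[n] z) C) atTop (nhds 0) := by rwa [hB] at hz
  obtain ⟨N, hN⟩ := (Metric.tendsto_atTop.mp hz') ε₀ hε₀0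
  have hN' : infDist (f^[N] z) C < ε₀ := by
    have := hN N le_rfl
    rwa [Real.dist_eq, sub_zero, _root_.abs_of_nonneg infDist_nonneg] at this
  refine ⟨{x | infDist (f^[N] x) C < ε₀}, ?_, ?_, hN'⟩
  · intro x hx
    exact (memB_iter hB N x).mpr (hε₀ _ hx)
  · exact IsOpen.preimage ((f_diff hf).continuous.iterate N)
      (isOpen_lt (continuous_infDist_pt C) continuous_const)

lemma reach (hf : f = fun z => lam * Complex.exp z) (hper : f^[p] z₀ = z₀)
    (hattr : ‖deriv (f^[p]) z₀‖ < 1) (hp0 : 0 < p)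
    (hB : B = {z | Tendsto (fun n => infDist (f^[n] z) C) atTop (nhds 0)})
    (hC : C = {w | ∃ j < p, f^[j] z₀ = w}) :
    ∀ z ∈ B, ∀ t : ℝ, 0 < t → ∃ N, dist (f^[N] z) z₀ < t := by
  intro z hz t ht
  obtain ⟨ε, hε0, hε⟩ := cont_fin (fun i => f^[p - i])
    (fun i => (f_diff hf).continuous.iterate _) (fun i => f^[i] z₀) p t ht
  have hCne : C.Nonempty := ⟨z₀, by rw [hC]; exact ⟨0, hp0, rfl⟩⟩
  have hz' : Tendsto (fun n => infDist (f^[n] z) C) atTop (nhds 0) := by rwa [hB] at hz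
  obtain ⟨n, hn⟩ := (Metric.tendsto_atTop.mp hz') ε hε0
  have hn' : infDist (f^[n] z) C < ε := by
    have := hn n le_rfl
    rwa [Real.dist_eq, sub_zero, _root_.abs_of_nonneg infDist_nonneg] at this
  obtain ⟨y, hy, hxy⟩ := (infDist_lt_iff hCne).mp hn'
  rw [hC] at hy
  obtain ⟨j, hj, rfl⟩ := hy
  have h1 := hε j hj _ hxy
  rw [iter_sub_apply j hj hper] at h1
  exact ⟨(p - j) + n, by rwa [Function.iterate_add_apply]⟩

lemma unif (hf : f = fun z => lam * Complex.exp z) (hper : f^[p] z₀ = z₀)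
    (hattr : ‖deriv (f^[p]) z₀‖ < 1) (hp0 : 0 < p)
    (hB : B = {z | Tendsto (fun n => infDist (f^[n] z) C) atTop (nhds 0)})
    (hC : C = {w | ∃ j < p, f^[j] z₀ = w})
    (K : Set ℂ) (hK : IsCompact K) (hKB : K ⊆ B) (t : ℝ) (ht : 0 < t) :
    ∃ N, ∀ n ≥ N, ∀ x ∈ K, ∃ i < p, dist (f^[n] x) (f^[i] z₀) < t := by
  obtain ⟨c, hc0, hc1, hctl⟩ := orbit_ctrl hf hper hattr hp0
  obtain ⟨ρ, hρ0, hρt, hctlρ⟩ := hctl t ht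
  have hcov : ∀ x ∈ K, ∃ N : ℕ, dist (f^[N] x) z₀ < ρ := fun x hx =>
    reach hf hper hattr hp0 hB hC x (hKB hx) ρ hρ0
  choose! Nx hNx using hcov
  have hsub : K ⊆ ⋃ x ∈ K, (f^[Nx x]) ⁻¹' (ball z₀ ρ) := by
    intro x hx
    exact mem_iUnion₂.mpr ⟨x, hx, hNx x hx⟩
  obtain ⟨b', hb'K, hb'fin, hb'cov⟩ := hK.elim_finite_subcover_image
    (fun x _ => IsOpen.preimage ((f_diff hf).continuous.iterate _) isOpen_ball) hsub
  set N := hb'fin.toFinset.sup Nx with hN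
  refine ⟨N, ?_⟩
  intro n hn x hx
  obtain ⟨y, hy, hxy⟩ := mem_iUnion₂.mp (hb'cov hx)
  have hNy : Nx y ≤ N := Finset.le_sup (hb'fin.mem_toFinset.mpr hy)
  have hu : dist (f^[Nx y] x) z₀ < ρ := hxy
  have h2 := (hctlρ _ hu).2 (n - Nx y)
  refine ⟨(n - Nx y) % p, Nat.mod_lt _ hp0, ?_⟩
  rwa [← Function.iterate_add_apply, Nat.sub_add_cancel (le_trans hNy hn)] at h2

set_option maxHeartbeats 1000000 in
lemma single_idx (hf : f = fun z => lam * Complex.exp z) (hper : f^[p] z₀ = z₀)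
    (hattr : ‖deriv (f^[p]) z₀‖ < 1) (hp0 : 0 < p)
    (hB : B = {z | Tendsto (fun n => infDist (f^[n] z) C) atTop (nhds 0)})
    (hC : C = {w | ∃ j < p, f^[j] z₀ = w})
    (K : Set ℂ) (hK : IsCompact K) (hKc : IsPreconnected K) (hKne : K.Nonempty)
    (hKB : K ⊆ B) (t : ℝ) (ht : 0 < t)
    (hs2 : ∀ i < p, ∀ j < p, i ≠ j → 2*t ≤ dist (f^[i] z₀) (f^[j] z₀)) :
    ∃ N, ∀ n ≥ N, ∃ i < p, ∀ x ∈ K, dist (f^[n] x) (f^[i] z₀) < t := by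
  obtain ⟨N, hN⟩ := unif hf hper hattr hp0 hB hC K hK hKB t ht
  refine ⟨N, ?_⟩
  intro n hn
  obtain ⟨x₀, hx₀⟩ := hKne
  obtain ⟨i₀, hi₀, hdist₀⟩ := hN n hn x₀ hx₀
  refine ⟨i₀, hi₀, ?_⟩
  set u : Set ℂ := (f^[n]) ⁻¹' (ball (f^[i₀] z₀) t) with hu
  set v : Set ℂ := ⋃ i ∈ {i : ℕ | i < p ∧ i ≠ i₀}, (f^[n]) ⁻¹' (ball (f^[i] z₀) t) with hv
  have huo : IsOpen u := IsOpen.preimage ((f_diff hf).continuous.iterate _) isOpen_ball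
  have hvo : IsOpen v := isOpen_biUnion (fun i _ =>
    IsOpen.preimage ((f_diff hf).continuous.iterate _) isOpen_ball)
  have hdisj : Disjoint u v := by
    rw [Set.disjoint_left]
    intro x hxu hxv
    obtain ⟨i, hi, hxi⟩ := mem_iUnion₂.mp hxv
    have : dist (f^[i] z₀) (f^[i₀] z₀) < 2*t := by
      calc dist (f^[i] z₀) (f^[i₀] z₀) ≤ dist (f^[i] z₀) (f^[n] x) + dist (f^[n] x) (f^[i₀] z₀) :=
            dist_triangle _ _ _
        _ < t + t := add_lt_add (by rw [dist_comm]; exact hxi) hxu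
        _ = 2*t := by ring
    exact absurd (hs2 i hi.1 i₀ hi₀ hi.2) (not_le.mpr this)
  have hcover : K ⊆ u ∪ v := by
    intro x hx
    obtain ⟨i, hi, hxi⟩ := hN n hn x hx
    by_cases hii : i = i₀
    · exact Or.inl (by rw [hu]; simp only [mem_preimage]; rw [← hii]; exact mem_ball.mpr hxi)
    · exact Or.inr (mem_iUnion₂.mpr ⟨i, ⟨hi, hii⟩, mem_ball.mpr hxi⟩)
  have hKu := hKc.subset_left_of_subset_union huo hvo hdisj hcover ⟨x₀, hx₀, hdist₀⟩
  intro x hx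
  exact hKu hx

lemma consec (hf : f = fun z => lam * Complex.exp z) (hp : 1 < p) (hper : f^[p] z₀ = z₀)
    (hmin : ∀ j, 0 < j → j < p → f^[j] z₀ ≠ z₀) (hattr : ‖deriv (f^[p]) z₀‖ < 1)
    (hB : B = {z | Tendsto (fun n => infDist (f^[n] z) C) atTop (nhds 0)})
    (hC : C = {w | ∃ j < p, f^[j] z₀ = w}) :
    ∀ i : ℕ, f^[i+1] z₀ ∉ connectedComponentIn B (f^[i] z₀) := by
  have hp0 : 0 < p := by omega
  intro i hmem
  set W := connectedComponentIn B (f^[i] z₀) with hW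
  have hWB : W ⊆ B := connectedComponentIn_subset _ _
  have hWopen : IsOpen W := (B_open hf hper hattr hp0 hB hC).connectedComponentIn
  have haW : f^[i] z₀ ∈ W := mem_connectedComponentIn (cycle_mem_B hB hC hp0 hper i)
  have hWconn : IsConnected W := ⟨⟨_, haW⟩, isPreconnected_connectedComponentIn⟩
  have hpath : IsPathConnected W := (hWopen.isConnected_iff_isPathConnected).mp hWconn
  have hjoin : JoinedIn W (f^[i] z₀) (f^[i+1] z₀) := hpath.joinedIn _ haW _ hmem
  set γ := hjoin.somePath with hγ
  set K := range ⇑γ with hK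
  have hKcompact : IsCompact K := isCompact_range γ.continuous
  have hKconn : IsPreconnected K := isPreconnected_range γ.continuous
  have hKne : K.Nonempty := range_nonempty _
  have hKB : K ⊆ B := by
    rw [hK, range_subset_iff]
    intro t
    exact hWB (hjoin.somePath_mem t)
  obtain ⟨s, hs0, hsep⟩ := sep_pos hp hper hmin
  obtain ⟨N, hN⟩ := single_idx hf hper hattr hp0 hB hC K hKcompact hKconn hKne hKB (s/2)
    (by positivity) (fun i hi j hj hij => by
      calc 2*(s/2) = s := by ring
        _ ≤ dist (f^[i] z₀) (f^[j] z₀) := hsep i hi j hj hij)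
  obtain ⟨j, hj, hval⟩ := hN N le_rfl
  have h1 := hval (γ 0) ⟨0, rfl⟩
  have h2 := hval (γ 1) ⟨1, rfl⟩
  rw [γ.source] at h1
  rw [γ.target] at h2
  rw [← Function.iterate_add_apply, iter_mod hp0 hper] at h1
  rw [← Function.iterate_add_apply, iter_mod hp0 hper] at h2
  have hNi : N + (i+1) = (N + i) + 1 := by omega
  rw [hNi] at h2
  have hab : (N+i) % p ≠ ((N+i)+1) % p := by
    intro h
    have hdvd : p ∣ ((N+i)+1) - (N+i) := (Nat.modEq_iff_dvd' (by omega)).mp h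
    simp at hdvd
    omega
  have htri : dist (f^[(N+i) % p] z₀) (f^[((N+i)+1) % p] z₀) < s := by
    calc dist (f^[(N+i) % p] z₀) (f^[((N+i)+1) % p] z₀)
        ≤ dist (f^[(N+i) % p] z₀) (f^[j] z₀) + dist (f^[j] z₀) (f^[((N+i)+1) % p] z₀) :=
          dist_triangle _ _ _
      _ < s/2 + s/2 := add_lt_add h1 (by rw [dist_comm]; exact h2)
      _ = s := by ring
  exact absurd (hsep _ (Nat.mod_lt _ hp0) _ (Nat.mod_lt _ hp0) hab) (not_le.mpr htri)

lemma frontier_ccIn {U : Set ℂ} (hU : IsOpen U) (x : ℂ) :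
    frontier (connectedComponentIn U x) ⊆ Uᶜ := by
  intro y hy
  by_contra hyU
  rw [Set.notMem_compl_iff] at hyU
  set V := connectedComponentIn U x with hV
  have hVopen : IsOpen V := hU.connectedComponentIn
  have hyV : y ∉ V := fun h => ((hVopen.frontier_eq ▸ hy).2) h
  have hyc : y ∈ closure V := (hVopen.frontier_eq ▸ hy).1
  have hWopen : IsOpen (connectedComponentIn U y) := hU.connectedComponentIn
  have hyW : y ∈ connectedComponentIn U y := mem_connectedComponentIn hyU
  obtain ⟨z, hzW, hzV⟩ := mem_closure_iff.mp hyc _ hWopen hyW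
  have h1 : connectedComponentIn U x = connectedComponentIn U z := connectedComponentIn_eq hzV
  have h2 : connectedComponentIn U y = connectedComponentIn U z := connectedComponentIn_eq hzW
  exact hyV (by rw [hV, h1, ← h2]; exact hyW)

lemma translates_distinct
    (hlam : lam ≠ 0) (hf : f = fun z => lam * Complex.exp z) (hp : 1 < p)
    (hper : f^[p] z₀ = z₀) (hmin : ∀ j, 0 < j → j < p → f^[j] z₀ ≠ z₀)
    (hattr : ‖deriv (f^[p]) z₀‖ < 1)
    (hC : C = {w | ∃ j < p, f^[j] z₀ = w})
    (hB : B = {z | Tendsto (fun n => infDist (f^[n] z) C) atTop (nhds 0)})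
    (w ζ : ℂ) (hwζ : f w = ζ) (hζB : ζ ∈ B)
    (h0U : (0:ℂ) ∉ connectedComponentIn B ζ)
    (k m : ℕ) (hkm : k ≠ m)
    (hkB : w + (k:ℂ)*(2*Real.pi*I) ∈ B) (hmB : w + (m:ℂ)*(2*Real.pi*I) ∈ B) :
    connectedComponentIn B (w + (k:ℂ)*(2*Real.pi*I)) ≠
      connectedComponentIn B (w + (m:ℂ)*(2*Real.pi*I)) := by
  have hp0 : 0 < p := by omega
  have hfne : ∀ z : ℂ, f z ≠ 0 := by
    intro z
    rw [hf]
    exact mul_ne_zero hlam (Complex.exp_ne_zero z)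
  have hfper : ∀ (z : ℂ) (j : ℕ), f (z + (j:ℂ)*(2*Real.pi*I)) = f z := by
    intro z j
    rw [hf]
    simp only
    rw [Complex.exp_add]
    have : ((j:ℂ)) = ((j:ℤ):ℂ) := by push_cast; ring
    rw [this, Complex.exp_int_mul_two_pi_mul_I]
    ring
  intro hEq
  set ak := w + (k:ℂ)*(2*Real.pi*I) with hak
  set am := w + (m:ℂ)*(2*Real.pi*I) with ham
  set W := connectedComponentIn B ak with hW
  have haW : ak ∈ W := mem_connectedComponentIn hkB
  have hbW : am ∈ W := by rw [hEq]; exact mem_connectedComponentIn hmB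
  have hWB : W ⊆ B := connectedComponentIn_subset _ _
  have hWopen : IsOpen W := (B_open hf hper hattr hp0 hB hC).connectedComponentIn
  have hWconn : IsConnected W := ⟨⟨_, haW⟩, isPreconnected_connectedComponentIn⟩
  have hpath : IsPathConnected W := (hWopen.isConnected_iff_isPathConnected).mp hWconn
  have hjoin : JoinedIn W ak am := hpath.joinedIn _ haW _ hbW
  set γ := hjoin.somePath with hγ
  set η : ℝ → ℂ := f ∘ γ.extend with hη
  have hηc : Continuous η := (f_diff hf).continuous.comp γ.continuous_extend
  have hrange : range η = f '' (range ⇑γ) := by rw [hη, range_comp, Path.extend_range]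
  have hK'compact : IsCompact (range η) := by
    rw [hrange]
    exact (isCompact_range γ.continuous).image (f_diff hf).continuous
  have hK'conn : IsPreconnected (range η) := isPreconnected_range hηc
  have hK'B : range η ⊆ B := by
    rintro _ ⟨t, rfl⟩
    have h1 : γ.extend t ∈ range ⇑γ := by rw [← Path.extend_range]; exact mem_range_self t
    exact (memB_iff hB _).mp (hWB (by
      obtain ⟨u, hu⟩ := h1
      rw [← hu]
      exact hjoin.somePath_mem u))
  have hζη0 : η 0 = ζ := by
    show f (γ.extend 0) = ζ
    rw [Path.extend_zero]
    show f ak = ζ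
    rw [hak, hfper w k, hwζ]
  have hζη1 : η 1 = ζ := by
    show f (γ.extend 1) = ζ
    rw [Path.extend_one]
    show f am = ζ
    rw [ham, hfper w m, hwζ]
  have hζK : ζ ∈ range η := ⟨0, hζη0⟩
  have h0K : (0:ℂ) ∉ range η := by
    rintro ⟨t, ht⟩
    exact hfne (γ.extend t) ht
  have hKcl : IsClosed (range η) := hK'compact.isClosed
  have hKne : (range η).Nonempty := ⟨ζ, hζK⟩
  set V := connectedComponentIn (range η)ᶜ 0 with hVdef
  have h0c : (0:ℂ) ∈ (range η)ᶜ := h0K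
  have h0V : (0:ℂ) ∈ V := mem_connectedComponentIn h0c
  by_cases hVb : Bornology.IsBounded V
  · -- bounded case : maximum principle
    have hfr : frontier V ⊆ range η := by
      have h1 := frontier_ccIn hKcl.isOpen_compl (0:ℂ)
      rwa [compl_compl] at h1
    have hfrne : (frontier V).Nonempty := by
      rw [Set.nonempty_iff_ne_empty]
      intro hemp
      have hclop : IsClopen V := isClopen_iff_frontier_eq_empty.mpr hemp
      rcases isClopen_iff.mp hclop with h | h
      · rw [h] at h0V; exact h0V
      · have : ζ ∈ (range η)ᶜ := connectedComponentIn_subset _ _ (h ▸ mem_univ ζ)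
        exact this hζK
    obtain ⟨s, hs0, hsep⟩ := sep_pos hp hper hmin
    obtain ⟨ε₀, hε₀0, hε₀⟩ := mem_B_of_close hf hper hattr hp0 hB hC
    set t := min (s/2) (ε₀/2) with htdef
    have ht0 : 0 < t := lt_min (by positivity) (by positivity)
    have hs2 : ∀ i < p, ∀ j < p, i ≠ j → 2*t ≤ dist (f^[i] z₀) (f^[j] z₀) := by
      intro i hi j hj hij
      calc 2*t ≤ 2*(s/2) := by
            have := min_le_left (s/2) (ε₀/2)
            linarith
        _ = s := by ring
        _ ≤ _ := hsep i hi j hj hij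
    obtain ⟨N, hN⟩ := single_idx hf hper hattr hp0 hB hC (range η) hK'compact hK'conn
      hKne hK'B t ht0 hs2
    obtain ⟨i, hi, hval⟩ := hN N le_rfl
    have hdiff : Differentiable ℂ (fun x => f^[N] x - f^[i] z₀) :=
      ((f_diff hf).iterate N).sub_const _
    have hclB : closure V ⊆ B := by
      intro x hx
      have hb : ‖f^[N] x - f^[i] z₀‖ ≤ t :=
        Complex.norm_le_of_forall_mem_frontier_norm_le hVb hdiff.diffContOnCl
          (fun y hy => by
            show ‖f^[N] y - f^[i] z₀‖ ≤ t
            rw [← dist_eq_norm]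
            exact (hval y (hfr hy)).le) hx
      rw [← dist_eq_norm] at hb
      have hinf : infDist (f^[N] x) C < ε₀ := by
        have h3 : infDist (f^[N] x) C ≤ dist (f^[N] x) (f^[i] z₀) :=
          infDist_le_dist_of_mem (by rw [hC]; exact ⟨i, hi, rfl⟩)
        have h4 : t < ε₀ := lt_of_le_of_lt (min_le_right _ _) (by linarith)
        linarith
      exact (memB_iter hB N x).mpr (hε₀ _ hinf)
    have hVconn : IsConnected V := ⟨⟨0, h0V⟩, isPreconnected_connectedComponentIn⟩
    have hKconn' : IsConnected (range η) := ⟨⟨ζ, hζK⟩, hK'conn⟩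
    obtain ⟨y, hyfr⟩ := hfrne
    have hinter : (closure V ∩ range η).Nonempty :=
      ⟨y, frontier_subset_closure hyfr, hfr hyfr⟩
    have hSconn : IsConnected (closure V ∪ range η) :=
      IsConnected.union hinter hVconn.closure hKconn'
    have hSB : closure V ∪ range η ⊆ B := union_subset hclB hK'B
    have h0S : (0:ℂ) ∈ closure V ∪ range η := Or.inl (subset_closure h0V)
    have hsub := hSconn.isPreconnected.subset_connectedComponentIn h0S hSB
    have hζ0 : ζ ∈ connectedComponentIn B 0 := hsub (Or.inr hζK)
    have hccEq := connectedComponentIn_eq hζ0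
    have h0B : (0:ℂ) ∈ B := hSB h0S
    exact h0U (hccEq ▸ mem_connectedComponentIn h0B)
  · -- unbounded case : winding via lifts
    set d₀ : ℂ := ((m:ℂ) - (k:ℂ)) * (2*Real.pi*I) with hd₀def
    have hd0 : am - ak = d₀ := by rw [ham, hak, hd₀def]; ring
    have h2πI : (2*(Real.pi:ℂ)*I) ≠ 0 := by
      apply mul_ne_zero (mul_ne_zero two_ne_zero _) Complex.I_ne_zero
      exact_mod_cast Real.pi_ne_zero
    have hd0ne : d₀ ≠ 0 := by
      apply mul_ne_zero _ h2πI
      rw [sub_ne_zero]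
      exact fun h => hkm (by exact_mod_cast h.symm)
    have hη01 : η 1 = η 0 := by rw [hζη0, hζη1]
    -- base lift of η
    set L₀ : ℝ → ℂ := fun t => γ.extend t + Complex.log lam with hL₀def
    have hL₀c : Continuous L₀ := γ.continuous_extend.add continuous_const
    have hL₀ : ∀ t : ℝ, Complex.exp (L₀ t) = η t := by
      intro t
      rw [hL₀def]
      simp only
      rw [Complex.exp_add, Complex.exp_log hlam, hη]
      simp only [comp_apply, hf]
      ring
    have hL₀disp : L₀ 1 - L₀ 0 = d₀ := by
      rw [hL₀def]
      simp only
      rw [Path.extend_one, Path.extend_zero]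
      linear_combination hd0
    -- general facts about lifts
    have hinf : ∀ a : ℂ, a ∉ range η → 0 < infDist a (range η) := by
      intro a ha
      rcases (infDist_nonneg : 0 ≤ infDist a (range η)).lt_or_eq with h | h
      · exact h
      · exfalso
        have h1 : a ∈ closure (range η) := (mem_closure_iff_infDist_zero hKne).mpr h.symm
        rw [hKcl.closure_eq] at h1
        exact ha h1
    have hlow : ∀ (a : ℂ) (t : ℝ), infDist a (range η) ≤ ‖η t - a‖ := by
      intro a t
      rw [show ‖η t - a‖ = dist a (η t) by rw [dist_comm, dist_eq_norm]]
      exact infDist_le_dist_of_mem (mem_range_self t)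
    have hex : ∀ a : ℂ, a ∉ range η → ∃ L : ℝ → ℂ, Continuous L ∧
        ∀ u ∈ Icc (0:ℝ) 1, Complex.exp (L u) = η u - a := by
      intro a ha
      apply exists_exp_lift _ (hηc.sub continuous_const)
      intro t h
      exact absurd ⟨t, sub_eq_zero.mp h⟩ ha
    have key : ∀ a a' : ℂ, a ∉ range η → (∀ u : ℝ, 2*‖a' - a‖ < ‖η u - a‖) →
        ∀ L L' : ℝ → ℂ, Continuous L → Continuous L' →
        (∀ u ∈ Icc (0:ℝ) 1, Complex.exp (L u) = η u - a) →
        (∀ u ∈ Icc (0:ℝ) 1, Complex.exp (L' u) = η u - a') →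
        L 1 - L 0 = L' 1 - L' 0 := by
      intro a a' ha hcl L L' hLc hL'c hLl hL'l
      have hne_a : ∀ u : ℝ, η u - a ≠ 0 := by
        intro u h
        have h2 := hcl u
        rw [h, norm_zero] at h2
        linarith [norm_nonneg (a' - a)]
      set q : ℝ → ℂ := fun u => (η u - a') / (η u - a) with hq
      have hqnorm : ∀ u, ‖q u - 1‖ < 1 := by
        intro u
        have h1 : q u - 1 = (a - a') / (η u - a) := by
          rw [hq]
          simp only
          rw [div_sub_one (hne_a u)]
          congr 1
          ring
        rw [h1, norm_div, div_lt_one (norm_pos_iff.mpr (hne_a u))]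
        calc ‖a - a'‖ = ‖a' - a‖ := norm_sub_rev _ _
          _ < ‖η u - a‖ := by linarith [hcl u, norm_nonneg (a' - a)]
      have hqne : ∀ u, q u ≠ 0 := by
        intro u h
        have h2 := hqnorm u
        rw [h] at h2
        simp at h2
      have hqc : Continuous q :=
        (hηc.sub continuous_const).div (hηc.sub continuous_const) hne_a
      have hlogc : Continuous fun u => Complex.log (q u) := by
        rw [continuous_iff_continuousAt]
        intro u
        apply ContinuousAt.clog hqc.continuousAt
        have h3 : q u = 1 + (q u - 1) := by ring
        rw [h3]
        exact Complex.mem_slitPlane_of_norm_lt_one (hqnorm u)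
      set L'' : ℝ → ℂ := fun u => L u + Complex.log (q u) with hL''
      have hL''c : Continuous L'' := hLc.add hlogc
      have hL''l : ∀ u ∈ Icc (0:ℝ) 1, Complex.exp (L'' u) = η u - a' := by
        intro u hu
        rw [hL'']
        simp only
        rw [Complex.exp_add, Complex.exp_log (hqne u), hLl u hu, hq]
        simp only
        rw [mul_comm, div_mul_cancel₀ _ (hne_a u)]
      have hd := lift_disp_unique hL''c hL'c (fun u hu => by rw [hL''l u hu, hL'l u hu])
      have hq10 : q 1 = q 0 := by rw [hq]; simp only; rw [hη01]
      have h4 : L'' 1 - L'' 0 = L 1 - L 0 := by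
        rw [hL'']
        simp only
        rw [hq10]
        ring
      exact h4.symm.trans hd
    set P : ℂ → Prop := fun a => ∀ L : ℝ → ℂ, Continuous L →
        (∀ u ∈ Icc (0:ℝ) 1, Complex.exp (L u) = η u - a) → L 1 - L 0 = d₀ with hP
    set D : Set ℂ := {a | a ∉ range η ∧ P a} with hD
    set D' : Set ℂ := {a | a ∉ range η ∧ ¬ P a} with hD'
    have hloc : ∀ a : ℂ, a ∉ range η → ∃ ε > 0, ∀ a' ∈ ball a ε, a' ∉ range η ∧
        (∀ L L' : ℝ → ℂ, Continuous L → Continuous L' →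
          (∀ u ∈ Icc (0:ℝ) 1, Complex.exp (L u) = η u - a) →
          (∀ u ∈ Icc (0:ℝ) 1, Complex.exp (L' u) = η u - a') →
          L 1 - L 0 = L' 1 - L' 0) := by
      intro a ha
      refine ⟨infDist a (range η) / 3, div_pos (hinf a ha) (by norm_num), ?_⟩
      intro a' ha'
      have hnear : ‖a' - a‖ < infDist a (range η) / 3 := by
        rw [mem_ball, dist_eq_norm] at ha'
        exact ha'
      have hcl : ∀ u : ℝ, 2*‖a' - a‖ < ‖η u - a‖ := by
        intro u
        linarith [hlow a u, hinf a ha]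
      have ha'K : a' ∉ range η := by
        rintro ⟨u, hu⟩
        have h1 := hcl u
        rw [show η u - a = a' - a by rw [hu]] at h1
        linarith [norm_nonneg (a' - a)]
      exact ⟨ha'K, fun L L' hLc hL'c hl hl' => key a a' ha hcl L L' hLc hL'c hl hl'⟩
    have hDopen : IsOpen D := by
      rw [Metric.isOpen_iff]
      intro a ha
      obtain ⟨haK, haP⟩ := ha
      obtain ⟨ε, hε0, hεl⟩ := hloc a haK
      refine ⟨ε, hε0, ?_⟩
      intro a' ha'
      obtain ⟨ha'K, htr⟩ := hεl a' ha'
      refine ⟨ha'K, ?_⟩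
      intro L' hL'c hl'
      obtain ⟨L, hLc, hl⟩ := hex a haK
      rw [← htr L L' hLc hL'c hl hl']
      exact haP L hLc hl
    have hD'open : IsOpen D' := by
      rw [Metric.isOpen_iff]
      intro a ha
      obtain ⟨haK, haP⟩ := ha
      obtain ⟨ε, hε0, hεl⟩ := hloc a haK
      refine ⟨ε, hε0, ?_⟩
      intro a' ha'
      obtain ⟨ha'K, htr⟩ := hεl a' ha'
      refine ⟨ha'K, ?_⟩
      intro hP'
      apply haP
      intro L hLc hl
      obtain ⟨L', hL'c, hl'⟩ := hex a' ha'K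
      rw [htr L L' hLc hL'c hl hl']
      exact hP' L' hL'c hl'
    have hcover : V ⊆ D ∪ D' := by
      intro a haV
      have haK : a ∉ range η := connectedComponentIn_subset _ _ haV
      by_cases hPa : P a
      · exact Or.inl ⟨haK, hPa⟩
      · exact Or.inr ⟨haK, hPa⟩
    have h0D : (0:ℂ) ∈ D := by
      refine ⟨h0K, ?_⟩
      intro L hLc hl
      have hl0 : ∀ u ∈ Icc (0:ℝ) 1, Complex.exp (L u) = Complex.exp (L₀ u) := by
        intro u hu
        rw [hl u hu, hL₀ u, sub_zero]
      rw [lift_disp_unique hLc hL₀c hl0, hL₀disp]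
    obtain ⟨R, hR⟩ := isBounded_iff_forall_norm_le.mp hK'compact.isBounded
    obtain ⟨afar, hafarV, hafar⟩ : ∃ x ∈ V, R < ‖x‖ := by
      by_contra hcon
      push_neg at hcon
      exact hVb (isBounded_iff_forall_norm_le.mpr ⟨R, hcon⟩)
    have hafarne : afar ≠ 0 := by
      intro h
      rw [h, norm_zero] at hafar
      exact absurd (le_trans (norm_nonneg ζ) (hR ζ hζK)) (not_le.mpr hafar)
    have hafarK : afar ∉ range η := connectedComponentIn_subset _ _ hafarV
    have hfar : afar ∈ D' := by
      refine ⟨hafarK, ?_⟩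
      intro hPa
      set qf : ℝ → ℂ := fun u => (η u - afar) / (-afar) with hqf
      have hqfnorm : ∀ u, ‖qf u - 1‖ < 1 := by
        intro u
        have h1 : qf u - 1 = η u / (-afar) := by
          rw [hqf]
          simp only
          rw [div_sub_one (neg_ne_zero.mpr hafarne)]
          congr 1
          ring
        rw [h1, norm_div, norm_neg, div_lt_one (norm_pos_iff.mpr hafarne)]
        exact lt_of_le_of_lt (hR _ (mem_range_self u)) hafar
      have hqfne : ∀ u, qf u ≠ 0 := by
        intro u h
        have h2 := hqfnorm u
        rw [h] at h2
        simp at h2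
      have hqfc : Continuous qf := (hηc.sub continuous_const).div_const _
      have hlogfc : Continuous fun u => Complex.log (qf u) := by
        rw [continuous_iff_continuousAt]
        intro u
        apply ContinuousAt.clog hqfc.continuousAt
        have h3 : qf u = 1 + (qf u - 1) := by ring
        rw [h3]
        exact Complex.mem_slitPlane_of_norm_lt_one (hqfnorm u)
      set Lf : ℝ → ℂ := fun u => Complex.log (qf u) + Complex.log (-afar) with hLf
      have hLfc : Continuous Lf := hlogfc.add continuous_const
      have hLfl : ∀ u ∈ Icc (0:ℝ) 1, Complex.exp (Lf u) = η u - afar := by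
        intro u hu
        rw [hLf]
        simp only
        rw [Complex.exp_add, Complex.exp_log (hqfne u),
          Complex.exp_log (neg_ne_zero.mpr hafarne), hqf]
        simp only
        rw [div_mul_cancel₀ _ (neg_ne_zero.mpr hafarne)]
      have hdisp := hPa Lf hLfc hLfl
      have hzero : Lf 1 - Lf 0 = 0 := by
        rw [hLf]
        simp only
        rw [show qf 1 = qf 0 by rw [hqf]; simp only; rw [hη01]]
        ring
      rw [hzero] at hdisp
      exact hd0ne hdisp.symm
    have hVpc : IsPreconnected V := isPreconnected_connectedComponentIn
    obtain ⟨x, hxV, hxD, hxD'⟩ :=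
      hVpc D D' hDopen hD'open hcover ⟨0, h0V, h0D⟩ ⟨afar, hafarV, hfar⟩
    exact hxD'.2 hxD.2

end

theorem stmt15
    (lam : ℂ) (hlam : lam ≠ 0)
    (f : ℂ → ℂ) (hf : f = fun z => lam * Complex.exp z)
    (p : ℕ) (hp : 1 < p)
    (z₀ : ℂ) (hper : f^[p] z₀ = z₀)
    (hmin : ∀ j, 0 < j → j < p → f^[j] z₀ ≠ z₀)
    (hattr : ‖deriv (f^[p]) z₀‖ < 1)
    (C : Set ℂ) (hC : C = {w | ∃ j < p, f^[j] z₀ = w})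
    (B : Set ℂ)
    (hB : B = {z | Filter.Tendsto (fun n => Metric.infDist (f^[n] z) C) Filter.atTop (nhds 0)}) :
    {S : Set ℂ | ∃ z ∈ B, S = connectedComponentIn B z}.Infinite := by
  have hp0 : 0 < p := by omega
  have hcyc : ∀ i : ℕ, f^[i] z₀ ∈ B := cycle_mem_B hB hC hp0 hper
  have hcons := consec hf hp hper hmin hattr hB hC
  have hfper : ∀ (z : ℂ) (j : ℕ), f (z + (j:ℂ)*(2*Real.pi*Complex.I)) = f z := by
    intro z j
    rw [hf]
    simp only
    rw [Complex.exp_add]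
    have h1 : ((j:ℂ)) = ((j:ℤ):ℂ) := by push_cast; ring
    rw [h1, Complex.exp_int_mul_two_pi_mul_I]
    ring
  obtain ⟨w, ζ, hwζ, hζB, h0U⟩ :
      ∃ w ζ : ℂ, f w = ζ ∧ ζ ∈ B ∧ (0:ℂ) ∉ connectedComponentIn B ζ := by
    by_cases h0B : (0:ℂ) ∈ B
    · by_cases h01 : (0:ℂ) ∈ connectedComponentIn B (f^[1] z₀)
      · refine ⟨f^[1] z₀, f^[2] z₀, (Function.iterate_succ_apply' f 1 z₀).symm, hcyc 2, ?_⟩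
        intro h02
        have e1 := connectedComponentIn_eq h01
        have e2 := connectedComponentIn_eq h02
        apply hcons 1
        rw [e1, ← e2]
        exact mem_connectedComponentIn (hcyc 2)
      · exact ⟨f^[0] z₀, f^[1] z₀, (Function.iterate_succ_apply' f 0 z₀).symm, hcyc 1, h01⟩
    · exact ⟨f^[0] z₀, f^[1] z₀, (Function.iterate_succ_apply' f 0 z₀).symm, hcyc 1,
        fun h => h0B (connectedComponentIn_subset _ _ h)⟩
  have htransB : ∀ j : ℕ, w + (j:ℂ)*(2*Real.pi*Complex.I) ∈ B := by
    intro j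
    apply (memB_iff hB _).mpr
    rw [hfper w j, hwζ]
    exact hζB
  apply Set.infinite_of_injective_forall_mem
    (f := fun j : ℕ => connectedComponentIn B (w + (j:ℂ)*(2*Real.pi*Complex.I)))
  · intro a b hab
    by_contra hne
    exact translates_distinct hlam hf hp hper hmin hattr hC hB w ζ hwζ hζB h0U a b hne
      (htransB a) (htransB b) hab
  · intro j
    exact ⟨_, htransB j, rfl⟩
end
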